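/- arXiv:1212.1089 — 5 statements merged into one kernel-verified Lean document; each statement's English description precedes it below -/
import Mathlib

section
/- Let 𝒫 = ⟨P, ⊴⟩ be a preorder PR on a Kripke structure (Σ, →, ℓ). If (i) B ⊴ C, b ∈ B, c ∈ C imply ℓ(b) = ℓ(c); (ii) B →∃ C and B ⊴ D imply D →∃ μ𝒫(C); and (iii) for every C ∈ P, every block of P is either contained in or disjoint from pre(μ𝒫(C)); then Rel(𝒫) is a simulation relation on the Kripke structure. -/
/-!
Given `s → t` and `P(s) ⊴ P(s')`, condition (ii) yields an edge from `P(s')` into `μ𝒫(P(t))`.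
By (iii) the block `P(s')` then lies entirely inside `pre(μ𝒫(P(t)))`, so `s'` itself has a
successor `t'` in `μ𝒫(P(t))`, which means `P(t) ⊴ P(t')`.
-/

/-- `pre(T) = {s | ∃ t ∈ T, s → t}`. -/
def preR {α : Type*} (tr : α → α → Prop) (T : Set α) : Set α :=
  {s | ∃ t ∈ T, tr s t}

/-- `S₁ →∃ S₂` iff some state of `S₁` has a transition into `S₂`. -/
def exE {α : Type*} (tr : α → α → Prop) (S T : Set α) : Prop :=
  ∃ s ∈ S, ∃ t ∈ T, tr s t

/-- `μ𝒫(X) = ⋃ {C ∈ P | ∃ s ∈ X, P(s) ⊴ C}`, with the partition given by the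
block map `blk`. -/
def muB {α : Type*} (blk : α → Set α) (ord : Set α → Set α → Prop)
    (X : Set α) : Set α :=
  {y | ∃ s ∈ X, ord (blk s) (blk y)}

/-- `R` is a simulation on the Kripke structure `(α, tr, lab)`. -/
def IsSim {α AP : Type*} (tr : α → α → Prop) (lab : α → Set AP)
    (R : α → α → Prop) : Prop :=
  ∀ s s', R s s' → lab s = lab s' ∧ ∀ t, tr s t → ∃ t', tr s' t' ∧ R t t'

theorem subset_preR_of_exE {α : Type*} {tr : α → α → Prop} {B T : Set α}
    (hB : B ⊆ preR tr T ∨ B ∩ preR tr T = ∅) (h : exE tr B T) : B ⊆ preR tr T :=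
  let ⟨s, hs, t, ht, hst⟩ := h
  hB.resolve_right (Set.nonempty_iff_ne_empty.mp ⟨s, hs, t, ht, hst⟩)

theorem ord_of_mem_muB {α : Type*} {blk : α → Set α} {ord : Set α → Set α → Prop}
    (hrep : ∀ s t, s ∈ blk t → blk s = blk t) {t y : α} (h : y ∈ muB blk ord (blk t)) :
    ord (blk t) (blk y) := by
  obtain ⟨r, hr, hry⟩ := h
  rwa [hrep r t hr] at hry

theorem stmt2_general {α AP : Type*} (tr : α → α → Prop) (lab : α → Set AP)
    (blk : α → Set α)
    (hmem : ∀ s, s ∈ blk s)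
    (hrep : ∀ s t, s ∈ blk t → blk s = blk t)
    (ord : Set α → Set α → Prop)
    (hi : ∀ b c : α, ord (blk b) (blk c) → ∀ x ∈ blk b, ∀ y ∈ blk c,
      lab x = lab y)
    (hii : ∀ b c d : α, exE tr (blk b) (blk c) → ord (blk b) (blk d) →
      exE tr (blk d) (muB blk ord (blk c)))
    (hiii : ∀ c b : α, blk b ⊆ preR tr (muB blk ord (blk c)) ∨
      blk b ∩ preR tr (muB blk ord (blk c)) = ∅) :
    IsSim tr lab (fun s t => ord (blk s) (blk t)) := by
  intro s s' hss'
  refine ⟨hi s s' hss' s (hmem s) s' (hmem s'), fun t hst => ?_⟩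
  have hedge : exE tr (blk s') (muB blk ord (blk t)) :=
    hii s t s' ⟨s, hmem s, t, hmem t, hst⟩ hss'
  obtain ⟨t', ht', hs't'⟩ := subset_preR_of_exE (hiii t s') hedge (hmem s')
  exact ⟨t', hs't', ord_of_mem_muB hrep ht'⟩

/-- Sufficiency part of the characterization theorem: for a preorder PR
`𝒫 = ⟨P,⊴⟩`, conditions (i) labels agree on related blocks, (ii)
`B →∃ C` and `B ⊴ D` imply `D →∃ μ𝒫(C)`, and (iii) every block is contained
in or disjoint from `pre(μ𝒫(C))`, imply that `Rel(𝒫)` is a simulation. -/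
theorem stmt2 {α AP : Type*} (tr : α → α → Prop) (lab : α → Set AP)
    (blk : α → Set α)
    (hmem : ∀ s, s ∈ blk s)
    (hrep : ∀ s t, s ∈ blk t → blk s = blk t)
    (ord : Set α → Set α → Prop)
    (hrefl : ∀ s : α, ord (blk s) (blk s))
    (htrans : ∀ s t u : α, ord (blk s) (blk t) → ord (blk t) (blk u) →
      ord (blk s) (blk u))
    (hi : ∀ b c : α, ord (blk b) (blk c) → ∀ x ∈ blk b, ∀ y ∈ blk c,
      lab x = lab y)
    (hii : ∀ b c d : α, exE tr (blk b) (blk c) → ord (blk b) (blk d) →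
      exE tr (blk d) (muB blk ord (blk c)))
    (hiii : ∀ c b : α, blk b ⊆ preR tr (muB blk ord (blk c)) ∨
      blk b ∩ preR tr (muB blk ord (blk c)) = ∅) :
    IsSim tr lab (fun s t => ord (blk s) (blk t)) :=
  stmt2_general tr lab blk hmem hrep ord hi hii hiii
end

section
/- Let 𝒫 = ⟨P, ⊴⟩ be a preorder PR on a Kripke structure. If Rel(𝒫) is a simulation, then: (i) B ⊴ C, b ∈ B, c ∈ C imply ℓ(b) = ℓ(c); (ii) B →∃ C and B ⊴ D imply D →∃ μ𝒫(C); and (iii) for every C ∈ P and every block B ∈ P, either B ⊆ pre(μ𝒫(C)) or B ∩ pre(μ𝒫(C)) = ∅. -/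
/-! (i) and (ii) are the two clauses of the simulation property of `Rel(𝒫)`, transported
between a block and its members. For (iii), `μ𝒫(C)` is upward closed under `⊴`, so by the
simulation property its predecessor set is upward closed under `Rel(𝒫)`; since all members of
a block are `Rel(𝒫)`-related to each other, a block meeting that set lies inside it. -/

section PreorderPartition

variable {α AP : Type*} {tr : α → α → Prop} {lab : α → Set AP} {blk : α → Set α}
  {ord : Set α → Set α → Prop}

theorem subset_or_inter_eq_empty_of_mem_imp_subset {B S : Set α}
    (h : ∀ x ∈ B, x ∈ S → B ⊆ S) : B ⊆ S ∨ B ∩ S = ∅ :=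
  (B ∩ S).eq_empty_or_nonempty.symm.imp (fun ⟨x, hxB, hxS⟩ => h x hxB hxS) id

theorem IsSim.mem_preR {R : α → α → Prop} {T : Set α} (hsim : IsSim tr lab R)
    (hT : ∀ t t', t ∈ T → R t t' → t' ∈ T) {x y : α} (hxy : R x y)
    (hx : x ∈ preR tr T) : y ∈ preR tr T := by
  obtain ⟨t, ht, hxt⟩ := hx
  obtain ⟨t', hyt', htt'⟩ := (hsim x y hxy).2 t hxt
  exact ⟨t', hT t t' ht htt', hyt'⟩

theorem ord_blk_of_mem (hrep : ∀ s t, s ∈ blk t → blk s = blk t) {b c x y : α}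
    (hx : x ∈ blk b) (hy : y ∈ blk c) (hbc : ord (blk b) (blk c)) :
    ord (blk x) (blk y) := by
  rwa [hrep x b hx, hrep y c hy]

theorem mem_muB_of_ord
    (htrans : ∀ s t u : α, ord (blk s) (blk t) → ord (blk t) (blk u) →
      ord (blk s) (blk u))
    {X : Set α} {y z : α} (hy : y ∈ muB blk ord X) (hyz : ord (blk y) (blk z)) :
    z ∈ muB blk ord X :=
  let ⟨s, hs, hsy⟩ := hy
  ⟨s, hs, htrans s y z hsy hyz⟩

theorem lab_eq_of_ord (hrep : ∀ s t, s ∈ blk t → blk s = blk t)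
    (hsim : IsSim tr lab (fun s t => ord (blk s) (blk t))) {b c x y : α}
    (hbc : ord (blk b) (blk c)) (hx : x ∈ blk b) (hy : y ∈ blk c) :
    lab x = lab y :=
  (hsim x y (ord_blk_of_mem hrep hx hy hbc)).1

theorem exE_muB_of_ord (hmem : ∀ s, s ∈ blk s)
    (hrep : ∀ s t, s ∈ blk t → blk s = blk t)
    (hsim : IsSim tr lab (fun s t => ord (blk s) (blk t))) {b c d : α}
    (hbc : exE tr (blk b) (blk c)) (hbd : ord (blk b) (blk d)) :
    exE tr (blk d) (muB blk ord (blk c)) := by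
  obtain ⟨s, hs, t, ht, hst⟩ := hbc
  obtain ⟨t', hdt', htt'⟩ := (hsim s d (ord_blk_of_mem hrep hs (hmem d) hbd)).2 t hst
  exact ⟨d, hmem d, t', ⟨t, ht, htt'⟩, hdt'⟩

theorem blk_subset_or_inter_eq_empty_preR_muB
    (hrep : ∀ s t, s ∈ blk t → blk s = blk t)
    (hrefl : ∀ s : α, ord (blk s) (blk s))
    (htrans : ∀ s t u : α, ord (blk s) (blk t) → ord (blk t) (blk u) →
      ord (blk s) (blk u))
    (hsim : IsSim tr lab (fun s t => ord (blk s) (blk t))) (X : Set α) (b : α) :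
    blk b ⊆ preR tr (muB blk ord X) ∨ blk b ∩ preR tr (muB blk ord X) = ∅ :=
  subset_or_inter_eq_empty_of_mem_imp_subset fun _x hx hpre _y hy =>
    hsim.mem_preR (fun _ _ ht htt' => mem_muB_of_ord htrans ht htt')
      (ord_blk_of_mem hrep hx hy (hrefl b)) hpre

end PreorderPartition

/-- Necessity part of the characterization theorem: if `𝒫 = ⟨P,⊴⟩` is a
preorder PR and `Rel(𝒫)` is a simulation, then conditions (i), (ii), (iii)
hold. -/
theorem stmt3 {α AP : Type*} (tr : α → α → Prop) (lab : α → Set AP)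
    (blk : α → Set α)
    (hmem : ∀ s, s ∈ blk s)
    (hrep : ∀ s t, s ∈ blk t → blk s = blk t)
    (ord : Set α → Set α → Prop)
    (hrefl : ∀ s : α, ord (blk s) (blk s))
    (htrans : ∀ s t u : α, ord (blk s) (blk t) → ord (blk t) (blk u) →
      ord (blk s) (blk u))
    (hsim : IsSim tr lab (fun s t => ord (blk s) (blk t))) :
    (∀ b c : α, ord (blk b) (blk c) → ∀ x ∈ blk b, ∀ y ∈ blk c,
      lab x = lab y) ∧
    (∀ b c d : α, exE tr (blk b) (blk c) → ord (blk b) (blk d) →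
      exE tr (blk d) (muB blk ord (blk c))) ∧
    (∀ c b : α, blk b ⊆ preR tr (muB blk ord (blk c)) ∨
      blk b ∩ preR tr (muB blk ord (blk c)) = ∅) :=
  ⟨fun _ _ hbc _ hx _ hy => lab_eq_of_ord hrep hsim hbc hx hy,
    fun _ _ _ hbc hbd => exE_muB_of_ord hmem hrep hsim hbc hbd,
    fun c => blk_subset_or_inter_eq_empty_preR_muB hrep hrefl htrans hsim (blk c)⟩
end

section
/- Let 𝒫 = ⟨P, ⊴⟩ be a preorder PR on a Kripke structure such that 𝒫 is partition stable (for every C ∈ P and B ∈ P, B ⊆ pre(μ𝒫(C)) or B ∩ pre(μ𝒫(C)) = ∅). Suppose R_sim ⊆ Rel(𝒫), where R_sim is the simulation preorder. Let ⊴' be obtained from ⊴ by removing all pairs (B,D) such that for some block C, B →∃ C, B ⊴ D and D not→∃ μ𝒫(C). Then R_sim ⊆ Rel(⟨P, ⊴'⟩). -/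
/-- The simulation preorder: `s ≤ t` iff some simulation relates `s` to `t`. -/
def SimPre {α AP : Type*} (tr : α → α → Prop) (lab : α → Set AP)
    (s t : α) : Prop :=
  ∃ R, IsSim tr lab R ∧ R s t

/-- Correctness of relation refinement: if the preorder PR `𝒫 = ⟨P,⊴⟩` is
partition stable and `R_sim ⊆ Rel(𝒫)`, and `⊴'` is obtained from `⊴` by
removing every pair `(B,D)` such that for some block `C`, `B →∃ C`, `B ⊴ D`
and `D ¬→∃ μ𝒫(C)`, then `R_sim ⊆ Rel(⟨P,⊴'⟩)`. -/
theorem stmt6 {α AP : Type*} (tr : α → α → Prop) (lab : α → Set AP)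
    (blk : α → Set α)
    (hmem : ∀ s, s ∈ blk s)
    (hrep : ∀ s t, s ∈ blk t → blk s = blk t)
    (ord : Set α → Set α → Prop)
    (hrefl : ∀ s : α, ord (blk s) (blk s))
    (htrans : ∀ s t u : α, ord (blk s) (blk t) → ord (blk t) (blk u) →
      ord (blk s) (blk u))
    (hstable : ∀ c b : α, blk b ⊆ preR tr (muB blk ord (blk c)) ∨
      blk b ∩ preR tr (muB blk ord (blk c)) = ∅)
    (hsub : ∀ s t : α, SimPre tr lab s t → ord (blk s) (blk t)) :
    let ord' : Set α → Set α → Prop := fun B D =>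
      ord B D ∧ ∀ c : α, exE tr B (blk c) → exE tr D (muB blk ord (blk c))
    ∀ s t : α, SimPre tr lab s t → ord' (blk s) (blk t) := by
  intro ord' s t hst
  refine ⟨hsub s t hst, ?_⟩
  intro c ⟨s', hs', t', ht', htr⟩
  -- s' ∈ pre(muB(blk c))
  have hpre : s' ∈ preR tr (muB blk ord (blk c)) :=
    ⟨t', ⟨t', ht', hrefl t'⟩, htr⟩
  have hsubpre : blk s ⊆ preR tr (muB blk ord (blk c)) := by
    rcases hstable c s with h | h
    · exact h
    · exact absurd (Set.eq_empty_iff_forall_notMem.mp h s' ⟨hs', hpre⟩) not_false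
  obtain ⟨v, ⟨w, hw, hwv⟩, hsv⟩ := hsubpre (hmem s)
  obtain ⟨R, hR, hRst⟩ := hst
  obtain ⟨v', htv', hRvv'⟩ := (hR s t hRst).2 v hsv
  have hvv' : ord (blk v) (blk v') := hsub v v' ⟨R, hR, hRvv'⟩
  exact ⟨t, hmem t, v', ⟨w, hw, htrans w v v' hwv hvv'⟩, htv'⟩
end

section
/- Let ⟨P, ⊴⟩ be a partial order PR on a Kripke structure (⊴ is a partial order on the blocks of P). Then there exists a partition refiner (a block C such that for some block B, B ∩ pre(μ𝒫(C)) ≠ ∅ and B \ pre(μ𝒫(C)) ≠ ∅) if and only if there exist blocks B, C ∈ P such that: (i) B →∃ C; (ii) for every block C' with C ⊲ C' (C ⊴ C' and C ≠ C'), B not→∃ C'; and (iii) B ⊄ pre(C). -/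
/-- `P` is a partition of the whole state space. -/
def IsPartition {α : Type*} (P : Set (Set α)) : Prop :=
  (∀ B ∈ P, B.Nonempty) ∧ (∀ x : α, ∃! B, B ∈ P ∧ x ∈ B)

/-- `μ𝒫(C) = ⋃ {E ∈ P | C ⊴ E}` for a block `C` of `P`. -/
def muBlk {α : Type*} (P : Set (Set α)) (ord : Set α → Set α → Prop)
    (C : Set α) : Set α :=
  ⋃₀ {E | E ∈ P ∧ ord C E}

/-- `C` is a partition refiner for `⟨P,⊴⟩`: some block `B` meets
`pre(μ𝒫(C))` but is not contained in it. -/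
def IsPRefiner {α : Type*} (tr : α → α → Prop) (P : Set (Set α))
    (ord : Set α → Set α → Prop) (C : Set α) : Prop :=
  C ∈ P ∧ ∃ B ∈ P, (B ∩ preR tr (muBlk P ord C)).Nonempty ∧
    (B \ preR tr (muBlk P ord C)).Nonempty

/-!
A partition refiner `C` with witness block `B` stays a refiner when replaced by any block `C'` above
`C` that `B` reaches, since `μ𝒫(C') ⊆ μ𝒫(C)`. Hence a `⊴`-maximal refiner `C` satisfies (ii) for its
witness `B`, and under (ii) the only block of `μ𝒫(C)` that `B` reaches is `C` itself, so
`B ∩ pre(μ𝒫(C)) = B ∩ pre(C)`; this identity turns the refiner condition into (i) and (iii), in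
both directions.
-/

section PartitionRefiner

variable {α : Type*} (tr : α → α → Prop) (P : Set (Set α)) (ord : Set α → Set α → Prop)

theorem preR_mono {S T : Set α} (h : S ⊆ T) : preR tr S ⊆ preR tr T :=
  fun _ ⟨t, ht, hst⟩ => ⟨t, h ht, hst⟩

theorem subset_muBlk {C : Set α} (hC : C ∈ P) (hCC : ord C C) : C ⊆ muBlk P ord C :=
  Set.subset_sUnion_of_mem ⟨hC, hCC⟩

theorem muBlk_subset_muBlk
    (htrans : ∀ B ∈ P, ∀ C ∈ P, ∀ D ∈ P, ord B C → ord C D → ord B D)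
    {C C' : Set α} (hC : C ∈ P) (hC' : C' ∈ P) (hCC' : ord C C') :
    muBlk P ord C' ⊆ muBlk P ord C :=
  Set.sUnion_subset_sUnion fun E ⟨hE, hC'E⟩ => ⟨hE, htrans C hC C' hC' E hE hCC' hC'E⟩

theorem inter_preR_muBlk_eq {B C : Set α} (hC : C ∈ P) (hCC : ord C C)
    (hii : ∀ C' ∈ P, ord C C' → C ≠ C' → ¬ exE tr B C') :
    B ∩ preR tr (muBlk P ord C) = B ∩ preR tr C := by
  refine subset_antisymm (fun s ⟨hsB, hs⟩ => ⟨hsB, ?_⟩)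
    (Set.inter_subset_inter_right B (preR_mono tr (subset_muBlk P ord hC hCC)))
  obtain ⟨t, ⟨E, ⟨hE, hCE⟩, htE⟩, hst⟩ := hs
  obtain rfl | hne := eq_or_ne C E
  · exact ⟨t, htE, hst⟩
  · exact absurd ⟨s, hsB, t, htE, hst⟩ (hii E hE hCE hne)

theorem nonempty_inter_preR_muBlk_iff {B C : Set α} (hC : C ∈ P) (hCC : ord C C)
    (hii : ∀ C' ∈ P, ord C C' → C ≠ C' → ¬ exE tr B C') :
    ((B ∩ preR tr (muBlk P ord C)).Nonempty ∧ (B \ preR tr (muBlk P ord C)).Nonempty) ↔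
      exE tr B C ∧ ¬ B ⊆ preR tr C := by
  have heq := inter_preR_muBlk_eq tr P ord hC hCC hii
  have hdiff : B \ preR tr (muBlk P ord C) = B \ preR tr C := by
    rw [← Set.sdiff_self_inter, heq, Set.sdiff_self_inter]
  rw [heq, hdiff, Set.sdiff_nonempty]
  exact Iff.rfl

theorem isPRefiner_of_exE_of_ord (hrefl : ∀ B ∈ P, ord B B)
    (htrans : ∀ B ∈ P, ∀ C ∈ P, ∀ D ∈ P, ord B C → ord C D → ord B D)
    {B C C' : Set α} (hC : C ∈ P) (hC' : C' ∈ P) (hCC' : ord C C') (hB : B ∈ P)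
    (hexit : (B \ preR tr (muBlk P ord C)).Nonempty) (hBC' : exE tr B C') :
    IsPRefiner tr P ord C' := by
  obtain ⟨s, hsB, t, htC', hst⟩ := hBC'
  refine ⟨hC', B, hB, ⟨s, hsB, t, subset_muBlk P ord hC' (hrefl C' hC') htC', hst⟩, ?_⟩
  exact hexit.mono (Set.sdiff_subset_sdiff_right
    (preR_mono tr (muBlk_subset_muBlk P ord htrans hC hC' hCC')))

theorem exists_isPRefiner_maximal [Finite α] (hrefl : ∀ B ∈ P, ord B B)
    (htrans : ∀ B ∈ P, ∀ C ∈ P, ∀ D ∈ P, ord B C → ord C D → ord B D)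
    (hantisym : ∀ B ∈ P, ∀ C ∈ P, ord B C → ord C B → B = C)
    (hne : ∃ C, IsPRefiner tr P ord C) :
    ∃ C, IsPRefiner tr P ord C ∧ ∀ C', IsPRefiner tr P ord C' → ord C C' → C = C' := by
  -- Minimising the set of blocks above a refiner avoids building an order instance on `P`.
  obtain ⟨C, hC, hmin⟩ := Set.Finite.exists_minimalFor (fun C => {E | E ∈ P ∧ ord C E})
    {C | IsPRefiner tr P ord C} (Set.toFinite _) hne
  refine ⟨C, hC, fun C' hC' hCC' => ?_⟩
  have hsub : {E | E ∈ P ∧ ord C' E} ⊆ {E | E ∈ P ∧ ord C E} :=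
    fun E ⟨hE, hC'E⟩ => ⟨hE, htrans C hC.1 C' hC'.1 E hE hCC' hC'E⟩
  have hC'C : ord C' C := (hmin hC' hsub ⟨hC.1, hrefl C hC.1⟩).2
  exact hantisym C hC.1 C' hC'.1 hCC' hC'C

end PartitionRefiner

theorem stmt9_general {α : Type*} [Finite α] (tr : α → α → Prop)
    (P : Set (Set α))
    (ord : Set α → Set α → Prop)
    (hrefl : ∀ B ∈ P, ord B B)
    (htrans : ∀ B ∈ P, ∀ C ∈ P, ∀ D ∈ P, ord B C → ord C D → ord B D)
    (hantisym : ∀ B ∈ P, ∀ C ∈ P, ord B C → ord C B → B = C) :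
    (∃ C, IsPRefiner tr P ord C) ↔
    (∃ B ∈ P, ∃ C ∈ P, exE tr B C ∧
      (∀ C' ∈ P, ord C C' → C ≠ C' → ¬ exE tr B C') ∧
      ¬ B ⊆ preR tr C) := by
  constructor
  · rintro ⟨C₀, hC₀⟩
    obtain ⟨C, hC, hCmax⟩ := exists_isPRefiner_maximal tr P ord hrefl htrans hantisym ⟨C₀, hC₀⟩
    obtain ⟨hCP, B, hBP, hmeet, hexit⟩ := hC
    have hii : ∀ C' ∈ P, ord C C' → C ≠ C' → ¬ exE tr B C' := fun C' hC'P hCC' hne hBC' =>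
      hne <| hCmax C' (isPRefiner_of_exE_of_ord tr P ord hrefl htrans hCP hC'P hCC' hBP hexit hBC')
        hCC'
    obtain ⟨hi, hiii⟩ :=
      (nonempty_inter_preR_muBlk_iff tr P ord hCP (hrefl C hCP) hii).1 ⟨hmeet, hexit⟩
    exact ⟨B, hBP, C, hCP, hi, hii, hiii⟩
  · rintro ⟨B, hBP, C, hCP, hi, hii, hiii⟩
    exact ⟨C, hCP, B, hBP,
      (nonempty_inter_preR_muBlk_iff tr P ord hCP (hrefl C hCP) hii).2 ⟨hi, hiii⟩⟩

/-- Characterization of the existence of a partition refiner for a partial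
order PR on a finite Kripke structure: a partition refiner exists iff there
are blocks `B, C ∈ P` such that (i) `B →∃ C`, (ii) `B ¬→∃ C'` for every block
`C'` strictly above `C`, and (iii) `B ⊄ pre(C)`. -/
theorem stmt9 {α : Type*} [Finite α] (tr : α → α → Prop)
    (P : Set (Set α)) (hP : IsPartition P)
    (ord : Set α → Set α → Prop)
    (hrefl : ∀ B ∈ P, ord B B)
    (htrans : ∀ B ∈ P, ∀ C ∈ P, ∀ D ∈ P, ord B C → ord C D → ord B D)
    (hantisym : ∀ B ∈ P, ∀ C ∈ P, ord B C → ord C B → B = C) :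
    (∃ C, IsPRefiner tr P ord C) ↔
    (∃ B ∈ P, ∃ C ∈ P, exE tr B C ∧
      (∀ C' ∈ P, ord C C' → C ≠ C' → ¬ exE tr B C') ∧
      ¬ B ⊆ preR tr C) :=
  stmt9_general tr P ord hrefl htrans hantisym
end

section
/- Let 𝒫 = ⟨P, ⊴⟩ be a preorder PR which is partition stable and relation stable, satisfies the labeling condition (B ⊴ C, b ∈ B, c ∈ C imply ℓ(b) = ℓ(c)), and satisfies R_sim ⊆ Rel(𝒫). Then Rel(𝒫) = R_sim, i.e., for all s, t ∈ Σ: s ≤ t iff P(s) ⊴ P(t). -/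
/-- Correctness at the fixpoint: if the preorder PR `𝒫 = ⟨P,⊴⟩` on a finite
Kripke structure is partition stable and relation stable, satisfies the
labeling condition, and `R_sim ⊆ Rel(𝒫)`, then `Rel(𝒫) = R_sim`, i.e.
`s ≤ t ↔ P(s) ⊴ P(t)`. -/
theorem stmt13 {α AP : Type*} [Finite α] (tr : α → α → Prop)
    (lab : α → Set AP)
    (blk : α → Set α)
    (hmem : ∀ s, s ∈ blk s)
    (hrep : ∀ s t, s ∈ blk t → blk s = blk t)
    (ord : Set α → Set α → Prop)
    (hrefl : ∀ s : α, ord (blk s) (blk s))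
    (htrans : ∀ s t u : α, ord (blk s) (blk t) → ord (blk t) (blk u) →
      ord (blk s) (blk u))
    (hlab : ∀ b c : α, ord (blk b) (blk c) → ∀ x ∈ blk b, ∀ y ∈ blk c,
      lab x = lab y)
    (hpstable : ∀ c b : α, blk b ⊆ preR tr (muB blk ord (blk c)) ∨
      blk b ∩ preR tr (muB blk ord (blk c)) = ∅)
    (hrstable : ¬ ∃ b c d : α, exE tr (blk b) (blk c) ∧
      ord (blk b) (blk d) ∧ ¬ exE tr (blk d) (muB blk ord (blk c)))
    (hsub : ∀ s t : α, SimPre tr lab s t → ord (blk s) (blk t)) :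
    ∀ s t : α, SimPre tr lab s t ↔ ord (blk s) (blk t) := by
  push_neg at hrstable
  intro s t
  constructor
  · exact hsub s t
  · intro h
    refine ⟨fun x y => ord (blk x) (blk y), ?_, h⟩
    intro a b hab
    constructor
    · exact hlab a b hab a (hmem a) b (hmem b)
    · intro u htu
      -- a →∃ blk u, so by relation stability b's block reaches muB(blk u)
      have hex : exE tr (blk a) (blk u) := ⟨a, hmem a, u, hmem u, htu⟩
      have hd := hrstable a u b hex hab
      obtain ⟨d, hd1, v, hv, hdv⟩ := hd
      -- blk b intersects preR tr (muB blk ord (blk u)), so it's contained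
      have hint : (blk b ∩ preR tr (muB blk ord (blk u))).Nonempty :=
        ⟨d, hd1, v, hv, hdv⟩
      have hsubset : blk b ⊆ preR tr (muB blk ord (blk u)) := by
        rcases hpstable u b with h1 | h1
        · exact h1
        · exact absurd h1 (by rw [Set.eq_empty_iff_forall_notMem]; push_neg
                              exact hint)
      obtain ⟨w, hw, hbw⟩ := hsubset (hmem b)
      obtain ⟨x, hx, hxw⟩ := hw
      exact ⟨w, hbw, by rwa [hrep x u hx] at hxw⟩
end
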